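/- arXiv:1211.4451 — 2 statements merged into one kernel-verified Lean document; each statement's English description precedes it below -/
import Mathlib

section
/- Let (Ḡ, j, p) be a central extension of a group G by ℝ, s_x a section of p (with s_x(1)=1) with homogeneous associated cochain φ and bounded defect c_x, and let (Ψ, f) be an abstract kernel for groups Π and G. Define Ψ̄(α)(ḡ) := s_x(Ψ(α)(p(ḡ)))·j(φ(ḡ)) and F_x := s_x ∘ f. Then for every α ∈ Π: (0) Ψ̄(α) : Ḡ → Ḡ is a bijection fixing j(ℝ) pointwise; (1) p(Ψ̄(α)(ḡ)) = Ψ(α)(p(ḡ)) for all ḡ ∈ Ḡ; (2) φ(Ψ̄(α)(ḡ)) = φ(ḡ) for all ḡ ∈ Ḡ; (3) Ψ̄(α) ∘ i_{ḡ} = i_{Ψ̄(α)(ḡ)} ∘ Ψ̄(α) for all ḡ ∈ Ḡ; (4) Ψ̄(α) ∘ Ψ̄(β) = i_{F_x(α,β)} ∘ Ψ̄(αβ) for all β ∈ Π; (5) Ψ̄(α)(ḡ·z̄) = Ψ̄(α)(ḡ)·Ψ̄(α)(z̄) for all ḡ ∈ Ḡ and z̄ ∈ Z(Ḡ). -/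
/-!
Every element of `Ḡ` is `s_x(g)·j(t)` for a unique pair `(g, t) = (p ḡ, φ ḡ)`, and in these
coordinates `Ψ̄(α)` is `(g, t) ↦ (Ψ(α)(g), t)`, so every claim can be checked on `p` and on `φ`. On `p` they are the corresponding identities in `G`. On `φ` they
reduce to two properties of `φ`, which is a homogeneous quasimorphism because its defect is `c_x`:
`φ` is invariant under conjugation and additive on commuting pairs. Both follow by evaluating on
`n`-th powers, where homogeneity makes the error grow linearly in `n` while the defect bound
keeps it bounded. Conjugation invariance also shows that `ḡ` and `h̄` commute as soon as `p ḡ`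
and `p h̄` do, because `ḡh̄` and `h̄ḡ` are conjugate.
-/

open Function

theorem eq_of_forall_abs_natCast_mul_sub_le {a b K : ℝ} (h : ∀ n : ℕ, |n * (a - b)| ≤ K) :
    a = b := by
  by_contra hne
  have hpos : 0 < |a - b| := abs_pos.mpr (sub_ne_zero.mpr hne)
  obtain ⟨n, hn⟩ := exists_nat_gt (K / |a - b|)
  have hK := h n
  rw [abs_mul, Nat.abs_cast] at hK
  linarith [(div_lt_iff₀ hpos).mp hn]

structure IsHomogeneousQuasimorphism {M : Type*} [Group M] (φ : M → ℝ) : Prop where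
  map_zpow : ∀ (x : M) (n : ℤ), φ (x ^ n) = n * φ x
  exists_abs_defect_le : ∃ K : ℝ, ∀ x y : M, |φ (x * y) - φ x - φ y| ≤ K

namespace IsHomogeneousQuasimorphism

variable {M : Type*} [Group M] {φ : M → ℝ}

theorem map_pow (hφ : IsHomogeneousQuasimorphism φ) (x : M) (n : ℕ) : φ (x ^ n) = n * φ x := by
  simpa using hφ.map_zpow x n

theorem map_inv (hφ : IsHomogeneousQuasimorphism φ) (x : M) : φ x⁻¹ = -φ x := by
  simpa using hφ.map_zpow x (-1)

theorem map_mul_of_commute (hφ : IsHomogeneousQuasimorphism φ) {x y : M} (hxy : Commute x y) :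
    φ (x * y) = φ x + φ y := by
  obtain ⟨K, hK⟩ := hφ.exists_abs_defect_le
  refine eq_of_forall_abs_natCast_mul_sub_le (K := K) fun n => ?_
  have h := hK (x ^ n) (y ^ n)
  rw [← hxy.mul_pow, hφ.map_pow, hφ.map_pow, hφ.map_pow] at h
  convert h using 2
  ring

theorem map_conj (hφ : IsHomogeneousQuasimorphism φ) (x y : M) : φ (x * y * x⁻¹) = φ y := by
  obtain ⟨K, hK⟩ := hφ.exists_abs_defect_le
  refine eq_of_forall_abs_natCast_mul_sub_le (K := 2 * K) fun n => ?_
  have h₁ := hK (x * y ^ n) x⁻¹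
  have h₂ := hK x (y ^ n)
  rw [← conj_pow, hφ.map_pow, hφ.map_inv] at h₁
  rw [hφ.map_pow] at h₂
  rw [abs_le] at h₁ h₂ ⊢
  constructor <;> linarith

end IsHomogeneousQuasimorphism

section CentralExtension

variable {G Gb : Type*} [Group G] [Group Gb] {j : ℝ → Gb} {p : Gb →* G} {sx : G → Gb}
  {φ : Gb → ℝ}

theorem eq_of_proj_eq_of_cochain_eq (hφ : ∀ x, x = sx (p x) * j (φ x)) {x y : Gb}
    (hp : p x = p y) (hc : φ x = φ y) : x = y := by
  rw [hφ x, hφ y, hp, hc]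

theorem proj_section_mul (hsx : ∀ g, p (sx g) = g) (hpj : ∀ t, p (j t) = 1) (g : G) (t : ℝ) :
    p (sx g * j t) = g := by
  rw [map_mul, hsx, hpj, mul_one]

theorem cochain_section_mul (hj_inj : Injective j) (hsx : ∀ g, p (sx g) = g)
    (hpj : ∀ t, p (j t) = 1) (hφ : ∀ x, x = sx (p x) * j (φ x)) (g : G) (t : ℝ) :
    φ (sx g * j t) = t := by
  have h := hφ (sx g * j t)
  rw [proj_section_mul hsx hpj] at h
  exact (hj_inj (mul_left_cancel h)).symm

theorem cochain_mul (hj_hom : ∀ t u, j (t + u) = j t * j u) (hj_inj : Injective j)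
    (hj_cent : ∀ t, j t ∈ Subgroup.center Gb) (hsx : ∀ g, p (sx g) = g)
    (hpj : ∀ t, p (j t) = 1) (hφ : ∀ x, x = sx (p x) * j (φ x)) {cx : G → G → ℝ}
    (hcx : ∀ g h, j (cx g h) = sx g * sx h * (sx (g * h))⁻¹) (x y : Gb) :
    φ (x * y) = φ x + φ y + cx (p x) (p y) := by
  have hjc : ∀ t (a : Gb), a * j t = j t * a := fun t a => Subgroup.mem_center_iff.mp (hj_cent t) a
  have hxy : x * y = sx (p x * p y) * j (φ x + φ y + cx (p x) (p y)) := calc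
    x * y = sx (p x) * (j (φ x) * sx (p y)) * j (φ y) := by
      conv_lhs => rw [hφ x, hφ y]
      simp only [mul_assoc]
    _ = j (cx (p x) (p y)) * sx (p x * p y) * j (φ x + φ y) := by
      rw [← hjc (φ x) (sx (p y)), hcx, hj_hom]; group
    _ = sx (p x * p y) * j (φ x + φ y + cx (p x) (p y)) := by
      rw [← hjc (cx (p x) (p y)), mul_assoc, ← hj_hom, add_comm (cx _ _)]
  rw [hxy, cochain_section_mul hj_inj hsx hpj hφ]

theorem isHomogeneousQuasimorphism_cochain (hj_hom : ∀ t u, j (t + u) = j t * j u)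
    (hj_inj : Injective j) (hj_cent : ∀ t, j t ∈ Subgroup.center Gb) (hsx : ∀ g, p (sx g) = g)
    (hpj : ∀ t, p (j t) = 1) (hφ : ∀ x, x = sx (p x) * j (φ x))
    (hφ_hom : ∀ (x : Gb) (n : ℤ), φ (x ^ n) = n * φ x) {cx : G → G → ℝ}
    (hcx : ∀ g h, j (cx g h) = sx g * sx h * (sx (g * h))⁻¹)
    (hcx_bdd : ∃ k : ℝ, ∀ g h, |cx g h| ≤ k) :
    IsHomogeneousQuasimorphism φ := by
  obtain ⟨k, hk⟩ := hcx_bdd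
  refine ⟨hφ_hom, k, fun x y => ?_⟩
  rw [cochain_mul hj_hom hj_inj hj_cent hsx hpj hφ hcx]
  convert hk (p x) (p y) using 2
  ring

theorem commute_of_commute_proj (hφ : ∀ x, x = sx (p x) * j (φ x))
    (hq : IsHomogeneousQuasimorphism φ) {x y : Gb} (hxy : Commute (p x) (p y)) : Commute x y :=
  eq_of_proj_eq_of_cochain_eq hφ (by simpa only [map_mul] using hxy.eq) <| calc
    φ (x * y) = φ (x * (y * x) * x⁻¹) := by rw [← mul_assoc, mul_inv_cancel_right]
    _ = φ (y * x) := hq.map_conj x (y * x)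

variable {ψ : Gb → Gb}

theorem lift_bijective (hj_inj : Injective j) (hsx : ∀ g, p (sx g) = g) (hpj : ∀ t, p (j t) = 1)
    (hφ : ∀ x, x = sx (p x) * j (φ x)) {σ : G → G} (hσ : Bijective σ)
    (hpψ : ∀ x, p (ψ x) = σ (p x)) (hφψ : ∀ x, φ (ψ x) = φ x) : Bijective ψ := by
  refine ⟨fun x y hxy => eq_of_proj_eq_of_cochain_eq hφ (hσ.injective ?_) ?_, fun y => ?_⟩
  · rw [← hpψ, ← hpψ, hxy]
  · rw [← hφψ, hxy, hφψ]
  · obtain ⟨g, hg⟩ := hσ.surjective (p y)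
    refine ⟨sx g * j (φ y), eq_of_proj_eq_of_cochain_eq hφ ?_ ?_⟩
    · rw [hpψ, proj_section_mul hsx hpj, hg]
    · rw [hφψ, cochain_section_mul hj_inj hsx hpj hφ]

variable {F : Type*} [FunLike F G G] [MonoidHomClass F G G]

theorem lift_apply_j (hpj : ∀ t, p (j t) = 1) (hφ : ∀ x, x = sx (p x) * j (φ x)) (σ : F)
    (hpψ : ∀ x, p (ψ x) = σ (p x)) (hφψ : ∀ x, φ (ψ x) = φ x) (t : ℝ) : ψ (j t) = j t :=
  eq_of_proj_eq_of_cochain_eq hφ (by rw [hpψ, hpj, map_one]) (hφψ _)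

theorem lift_conj (hφ : ∀ x, x = sx (p x) * j (φ x)) (hq : IsHomogeneousQuasimorphism φ)
    (σ : F) (hpψ : ∀ x, p (ψ x) = σ (p x)) (hφψ : ∀ x, φ (ψ x) = φ x) (x y : Gb) :
    ψ (x * y * x⁻¹) = ψ x * ψ y * (ψ x)⁻¹ :=
  eq_of_proj_eq_of_cochain_eq hφ (by simp only [map_mul, map_inv, hpψ])
    (by rw [hq.map_conj, hφψ, hq.map_conj, hφψ])

theorem lift_mul_of_commute (hφ : ∀ x, x = sx (p x) * j (φ x))
    (hq : IsHomogeneousQuasimorphism φ) (σ : F) (hpψ : ∀ x, p (ψ x) = σ (p x))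
    (hφψ : ∀ x, φ (ψ x) = φ x) {x z : Gb} (hxz : Commute x z) : ψ (x * z) = ψ x * ψ z := by
  have hψxz : Commute (ψ x) (ψ z) := commute_of_commute_proj hφ hq <| by
    rw [hpψ, hpψ]
    exact (hxz.map p).map σ
  refine eq_of_proj_eq_of_cochain_eq hφ (by simp only [map_mul, hpψ]) ?_
  rw [hφψ, hq.map_mul_of_commute hxz, hq.map_mul_of_commute hψxz, hφψ, hφψ]

theorem lift_comp_lift (hsx : ∀ g, p (sx g) = g) (hφ : ∀ x, x = sx (p x) * j (φ x))
    (hq : IsHomogeneousQuasimorphism φ) {ψ₁ ψ₂ ψ₃ : Gb → Gb} {σ₁ σ₂ σ₃ : G → G} (a : G)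
    (hσ : ∀ g, σ₁ (σ₂ g) = a * σ₃ g * a⁻¹) (hp₁ : ∀ x, p (ψ₁ x) = σ₁ (p x))
    (hp₂ : ∀ x, p (ψ₂ x) = σ₂ (p x)) (hp₃ : ∀ x, p (ψ₃ x) = σ₃ (p x))
    (hφ₁ : ∀ x, φ (ψ₁ x) = φ x) (hφ₂ : ∀ x, φ (ψ₂ x) = φ x) (hφ₃ : ∀ x, φ (ψ₃ x) = φ x)
    (x : Gb) : ψ₁ (ψ₂ x) = sx a * ψ₃ x * (sx a)⁻¹ :=
  eq_of_proj_eq_of_cochain_eq hφ (by rw [hp₁, hp₂, hσ, map_mul, map_mul, map_inv, hsx, hp₃])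
    (by rw [hq.map_conj, hφ₁, hφ₂, hφ₃])

end CentralExtension

theorem stmt_13_general {G Gb P : Type*} [Group G] [Group Gb] [Group P]
    (j : ℝ → Gb) (p : Gb →* G)
    (hj_hom : ∀ t u : ℝ, j (t + u) = j t * j u)
    (hj_inj : Function.Injective j)
    (hj_cent : ∀ t : ℝ, j t ∈ Subgroup.center Gb)
    (hker : ∀ x : Gb, p x = 1 ↔ ∃ t : ℝ, j t = x)
    (sx : G → Gb) (hsx : ∀ g : G, p (sx g) = g)
    (φ : Gb → ℝ) (hφ : ∀ x : Gb, x = sx (p x) * j (φ x))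
    (hφ_hom : ∀ (x : Gb) (n : ℤ), φ (x ^ n) = n * φ x)
    (cx : G → G → ℝ) (hcx : ∀ g h : G, j (cx g h) = sx g * sx h * (sx (g * h))⁻¹)
    (hcx_bdd : ∃ k : ℝ, ∀ g h : G, |cx g h| ≤ k)
    -- abstract kernel (Ψ, f) for Π and G
    (Ψ : P → G ≃* G) (f : P → P → G)
    (hkernel : ∀ (α β : P) (g : G),
      Ψ α (Ψ β g) = f α β * Ψ (α * β) g * (f α β)⁻¹)
    -- `Ψ̄(α)(ḡ) = s_x(Ψ(α)(p(ḡ)))·j(φ(ḡ))` and `F_x = s_x ∘ f`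
    (Ψb : P → Gb → Gb) (hΨb : ∀ (α : P) (x : Gb), Ψb α x = sx (Ψ α (p x)) * j (φ x))
    (Fx : P → P → Gb) (hFx : ∀ α β : P, Fx α β = sx (f α β)) :
    ∀ α : P,
      -- (0)
      Function.Bijective (Ψb α) ∧ (∀ t : ℝ, Ψb α (j t) = j t) ∧
      -- (1)
      (∀ x : Gb, p (Ψb α x) = Ψ α (p x)) ∧
      -- (2)
      (∀ x : Gb, φ (Ψb α x) = φ x) ∧
      -- (3)
      (∀ x y : Gb, Ψb α (x * y * x⁻¹) = Ψb α x * Ψb α y * (Ψb α x)⁻¹) ∧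
      -- (4)
      (∀ (β : P) (x : Gb), Ψb α (Ψb β x) = Fx α β * Ψb (α * β) x * (Fx α β)⁻¹) ∧
      -- (5)
      (∀ x : Gb, ∀ z ∈ Subgroup.center Gb, Ψb α (x * z) = Ψb α x * Ψb α z) := by
  intro α
  have hpj : ∀ t, p (j t) = 1 := fun t => (hker (j t)).mpr ⟨t, rfl⟩
  have hq : IsHomogeneousQuasimorphism φ :=
    isHomogeneousQuasimorphism_cochain hj_hom hj_inj hj_cent hsx hpj hφ hφ_hom hcx hcx_bdd
  have hp : ∀ β x, p (Ψb β x) = Ψ β (p x) := fun β x => by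
    rw [hΨb, proj_section_mul hsx hpj]
  have hc : ∀ β x, φ (Ψb β x) = φ x := fun β x => by
    rw [hΨb, cochain_section_mul hj_inj hsx hpj hφ]
  refine ⟨lift_bijective hj_inj hsx hpj hφ (Ψ α).bijective (hp α) (hc α),
    lift_apply_j hpj hφ (Ψ α) (hp α) (hc α), hp α, hc α, lift_conj hφ hq (Ψ α) (hp α) (hc α),
    fun β x => ?_, fun x z hz =>
      lift_mul_of_commute hφ hq (Ψ α) (hp α) (hc α) (Subgroup.mem_center_iff.mp hz x)⟩
  rw [hFx]
  exact lift_comp_lift hsx hφ hq (f α β) (hkernel α β) (hp α) (hp β) (hp (α * β)) (hc α) (hc β)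
    (hc (α * β)) x

/-- properties of the family of bijections `Ψ̄(α)` of a central extension `Ḡ`
of `G` by `ℝ` induced by an abstract kernel `(Ψ, f)` via a section with homogeneous
associated cochain and bounded defect. -/
theorem stmt_13 {G Gb P : Type*} [Group G] [Group Gb] [Group P]
    (j : ℝ → Gb) (p : Gb →* G)
    (hj_hom : ∀ t u : ℝ, j (t + u) = j t * j u)
    (hj_inj : Function.Injective j)
    (hj_cent : ∀ t : ℝ, j t ∈ Subgroup.center Gb)
    (hp_surj : Function.Surjective p)
    (hker : ∀ x : Gb, p x = 1 ↔ ∃ t : ℝ, j t = x)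
    (sx : G → Gb) (hsx : ∀ g : G, p (sx g) = g) (hsx1 : sx 1 = 1)
    (φ : Gb → ℝ) (hφ : ∀ x : Gb, x = sx (p x) * j (φ x))
    (hφ_hom : ∀ (x : Gb) (n : ℤ), φ (x ^ n) = n * φ x)
    (cx : G → G → ℝ) (hcx : ∀ g h : G, j (cx g h) = sx g * sx h * (sx (g * h))⁻¹)
    (hcx_bdd : ∃ k : ℝ, ∀ g h : G, |cx g h| ≤ k)
    -- abstract kernel (Ψ, f) for Π and G
    (Ψ : P → G ≃* G) (f : P → P → G)
    (hkernel : ∀ (α β : P) (g : G),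
      Ψ α (Ψ β g) = f α β * Ψ (α * β) g * (f α β)⁻¹)
    -- `Ψ̄(α)(ḡ) = s_x(Ψ(α)(p(ḡ)))·j(φ(ḡ))` and `F_x = s_x ∘ f`
    (Ψb : P → Gb → Gb) (hΨb : ∀ (α : P) (x : Gb), Ψb α x = sx (Ψ α (p x)) * j (φ x))
    (Fx : P → P → Gb) (hFx : ∀ α β : P, Fx α β = sx (f α β)) :
    ∀ α : P,
      -- (0)
      Function.Bijective (Ψb α) ∧ (∀ t : ℝ, Ψb α (j t) = j t) ∧
      -- (1)
      (∀ x : Gb, p (Ψb α x) = Ψ α (p x)) ∧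
      -- (2)
      (∀ x : Gb, φ (Ψb α x) = φ x) ∧
      -- (3)
      (∀ x y : Gb, Ψb α (x * y * x⁻¹) = Ψb α x * Ψb α y * (Ψb α x)⁻¹) ∧
      -- (4)
      (∀ (β : P) (x : Gb), Ψb α (Ψb β x) = Fx α β * Ψb (α * β) x * (Fx α β)⁻¹) ∧
      -- (5)
      (∀ x : Gb, ∀ z ∈ Subgroup.center Gb, Ψb α (x * z) = Ψb α x * Ψb α z) :=
  stmt_13_general j p hj_hom hj_inj hj_cent hker sx hsx φ hφ hφ_hom cx hcx hcx_bdd Ψ f hkernel Ψb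
    hΨb Fx hFx
end

section
/- Let G and Π be groups, (Ψ, f) an abstract kernel for Π and G, and c a homogeneous bounded 2-cocycle on G such that c(Ψ(α)(g), Ψ(α)(h)) = c(g,h) for all α ∈ Π and g, h ∈ G (i.e. the bounded cohomology class of c is Π-invariant). Then e_c : Π³ → ℝ is a bounded 3-cocycle on Π with trivial real coefficients: e_c(β,γ,ζ) − e_c(αβ,γ,ζ) + e_c(α,βγ,ζ) − e_c(α,β,γζ) + e_c(α,β,γ) = 0 for all α,β,γ,ζ ∈ Π, and |e_c| ≤ 2·sup|c|. (Its class is the transgression δ([c]) ∈ H_b³(Π,ℝ), which coincides with the differential d₃ of the Hochschild–Serre spectral sequence.) -/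
/-!
Let `ℝ ×_c G` be the central extension of `G` by `ℝ` classified by `c`, and `ĝ = (0, g)`.
Homogeneity says `ĝⁿ = (0, gⁿ)`. If `z` is central in `G`, a bounded-homomorphism argument
shows `c(z, g) = c(g, z)`, so `ẑ` and `ĝ` commute; then `(ẑ ĝ)ⁿ = ẑⁿ ĝⁿ` reads
`n · c(z, g) = c(zⁿ, gⁿ)`, and boundedness forces `c(z, g) = 0`. Hence `c` does not see
central factors. The kernel relation makes `Ψ_α(f(β,γ)) f(α,βγ)` and `f(α,β) f(αβ,γ)` induce the
same inner automorphism, so they differ by a central element, and every `Ψ`-value in `e_c` may be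
replaced by a word in the values of `f`. The cocycle relation for `e_c` then becomes a formal
consequence of the cocycle identity for `c`, together with `c(f(α,β), ·) = c(·, f(α,β))`, which
holds because `c` is invariant under conjugation by `f(α,β)`.
-/

/-- A bounded real 2-cocycle on a group `G` (normalized: vanishing when one argument is 1). -/
def IsBounded2Cocycle {G : Type*} [Group G] (c : G → G → ℝ) : Prop :=
  (∃ k : ℝ, ∀ g h : G, |c g h| ≤ k) ∧
  (∀ g h k : G, c h k - c (g * h) k + c g (h * k) - c g h = 0) ∧
  (∀ g : G, c g 1 = 0) ∧ (∀ g : G, c 1 g = 0)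

/-- A homogeneous 2-cocycle: it vanishes on pairs of powers of a single element. -/
def IsHomogeneous2Cocycle {G : Type*} [Group G] (c : G → G → ℝ) : Prop :=
  ∀ (g : G) (n m : ℕ), c (g ^ n) (g ^ m) = 0

/-- The composition cochain `e_c(α,β,γ) = c(Ψ(α)(f(β,γ)), f(α,βγ)) − c(f(α,β), f(αβ,γ))`
associated to an abstract kernel `(Ψ, f)` and a 2-cochain `c` on `G`. -/
def eCochain {G P : Type*} [Group G] [Group P] (Ψ : P → G ≃* G) (f : P → P → G)
    (c : G → G → ℝ) (α β γ : P) : ℝ :=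
  c (Ψ α (f β γ)) (f α (β * γ)) - c (f α β) (f (α * β) γ)

lemma eq_zero_of_forall_abs_nat_mul_le {x K : ℝ} (h : ∀ n : ℕ, |n * x| ≤ K) : x = 0 := by
  by_contra hx
  obtain ⟨n, hn⟩ := exists_nat_gt (K / |x|)
  have hn' := h n
  rw [abs_mul, Nat.abs_cast, ← le_div_iff₀ (abs_pos.mpr hx)] at hn'
  linarith

lemma eq_zero_of_map_mul_of_abs_le {M : Type*} [Monoid M] {φ : M → ℝ}
    (hφ : ∀ g h, φ (g * h) = φ g + φ h) {K : ℝ} (hK : ∀ g, |φ g| ≤ K) (g : M) : φ g = 0 := by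
  have hpow (n : ℕ) : φ (g ^ n) = n * φ g := by
    induction n with
    | zero => simpa using hφ 1 1
    | succ n ih => rw [pow_succ, hφ, ih]; push_cast; ring
  exact eq_zero_of_forall_abs_nat_mul_le fun n => hpow n ▸ hK (g ^ n)

structure IsNormalized2Cocycle {G : Type*} [Monoid G] (c : G → G → ℝ) : Prop where
  cocycle : ∀ g h k : G, c h k - c (g * h) k + c g (h * k) - c g h = 0
  map_one_right : ∀ g : G, c g 1 = 0
  map_one_left : ∀ g : G, c 1 g = 0

/-- The central extension `ℝ ×_c G`, with `(s, g) * (t, h) = (s + t + c g h, g * h)`. -/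
@[ext]
structure TwistedProd {G : Type*} [Monoid G] {c : G → G → ℝ} (hc : IsNormalized2Cocycle c) where
  t : ℝ
  g : G

namespace TwistedProd

variable {G : Type*} [Monoid G] {c : G → G → ℝ} {hc : IsNormalized2Cocycle c}

instance : Mul (TwistedProd hc) := ⟨fun u v => ⟨u.t + v.t + c u.g v.g, u.g * v.g⟩⟩

lemma mk_mul_mk (s t : ℝ) (g h : G) :
    (⟨s, g⟩ * ⟨t, h⟩ : TwistedProd hc) = ⟨s + t + c g h, g * h⟩ := rfl

instance : Monoid (TwistedProd hc) where
  one := ⟨0, 1⟩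
  mul_assoc u v w := by
    ext
    · change u.t + v.t + c u.g v.g + w.t + c (u.g * v.g) w.g
        = u.t + (v.t + w.t + c v.g w.g) + c u.g (v.g * w.g)
      linarith [hc.cocycle u.g v.g w.g]
    · exact mul_assoc u.g v.g w.g
  one_mul u := by
    ext
    · change 0 + u.t + c 1 u.g = u.t
      rw [hc.map_one_left, zero_add, add_zero]
    · exact one_mul u.g
  mul_one u := by
    ext
    · change u.t + 0 + c u.g 1 = u.t
      rw [hc.map_one_right, add_zero, add_zero]
    · exact mul_one u.g

lemma mk_zero_pow {g : G} (hg : ∀ n : ℕ, c (g ^ n) g = 0) (n : ℕ) :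
    (⟨0, g⟩ : TwistedProd hc) ^ n = ⟨0, g ^ n⟩ := by
  induction n with
  | zero => rw [pow_zero, pow_zero]; rfl
  | succ n ih => rw [pow_succ, ih, mk_mul_mk, hg, pow_succ, add_zero, add_zero]

lemma mk_one_pow (t : ℝ) (n : ℕ) : (⟨t, 1⟩ : TwistedProd hc) ^ n = ⟨n * t, 1⟩ := by
  induction n with
  | zero => rw [pow_zero, Nat.cast_zero, zero_mul]; rfl
  | succ n ih => rw [pow_succ, ih, mk_mul_mk, hc.map_one_right, mul_one, Nat.cast_succ]; ring_nf

lemma commute_mk_one (t : ℝ) (u : TwistedProd hc) : Commute ⟨t, 1⟩ u := by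
  ext
  · change t + u.t + c 1 u.g = u.t + t + c u.g 1
    rw [hc.map_one_left, hc.map_one_right, add_comm t]
  · exact (one_mul u.g).trans (mul_one u.g).symm

end TwistedProd

namespace IsNormalized2Cocycle

variable {G : Type*} [Group G] {c : G → G → ℝ}

open TwistedProd in
lemma map_pow_pow_of_commute (hc : IsNormalized2Cocycle c) (hhom : IsHomogeneous2Cocycle c)
    {g h : G} (hgh : Commute g h) (hsymm : c g h = c h g) (n : ℕ) :
    c (g ^ n) (h ^ n) = n * c g h := by
  have hpow (x : G) : (⟨0, x⟩ : TwistedProd hc) ^ n = ⟨0, x ^ n⟩ :=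
    mk_zero_pow (fun k => by simpa only [pow_one] using hhom x k 1) n
  have hcomm : Commute (⟨0, g⟩ : TwistedProd hc) ⟨0, h⟩ := by
    rw [commute_iff_eq, mk_mul_mk, mk_mul_mk, hsymm, hgh.eq]
  have hsplit : (⟨0, g⟩ * ⟨0, h⟩ : TwistedProd hc) = ⟨c g h, 1⟩ * ⟨0, g * h⟩ := by
    rw [mk_mul_mk, mk_mul_mk, hc.map_one_left, one_mul, zero_add, zero_add, add_zero, add_zero]
  have key : (⟨n * c g h, (g * h) ^ n⟩ : TwistedProd hc) = ⟨c (g ^ n) (h ^ n), g ^ n * h ^ n⟩ :=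
    calc (⟨n * c g h, (g * h) ^ n⟩ : TwistedProd hc)
        = (⟨c g h, 1⟩ : TwistedProd hc) ^ n * ⟨0, g * h⟩ ^ n := by
          rw [mk_one_pow, hpow, mk_mul_mk, hc.map_one_left, add_zero, add_zero, one_mul]
      _ = (⟨0, g⟩ * ⟨0, h⟩) ^ n := by rw [← (commute_mk_one _ _).mul_pow, hsplit]
      _ = ⟨0, g⟩ ^ n * ⟨0, h⟩ ^ n := hcomm.mul_pow n
      _ = ⟨c (g ^ n) (h ^ n), g ^ n * h ^ n⟩ := by rw [hpow, hpow, mk_mul_mk, zero_add, zero_add]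
  exact (congrArg TwistedProd.t key).symm

/-- With `a, b, d, t, m, w` the values of `f` at `(α,β), (αβ,γ), (αβγ,ζ), (α,βγ), (αβ,γζ),
(α,βγζ)`, the five terms of `δe_c(α,β,γ,ζ)` reduce to these, central factors dropped. -/
lemma transgression_identity (hc : IsNormalized2Cocycle c) (a b d t m w : G)
    (hsymm : ∀ g, c a g = c g a) :
    c (b * d * m⁻¹) (m * w⁻¹ * a) - c (a * b * t⁻¹) (t * d * w⁻¹)
      - (c (b * d * m⁻¹) m - c b d) + (c (t * d * w⁻¹) w - c t d)
      - (c (a * m * w⁻¹) w - c a m) + (c (a * b * t⁻¹) t - c a b) = 0 := by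
  have := hc.cocycle (a * b * t⁻¹) t d
  have := hc.cocycle (a * b * t⁻¹) (t * d) w⁻¹
  have := hc.cocycle (t * d) w⁻¹ w
  have := hc.cocycle (a * m) w⁻¹ w
  have := hc.cocycle a b d
  have := hc.cocycle a m w⁻¹
  have := hc.cocycle a (b * d) w⁻¹
  have := hc.cocycle (b * d * m⁻¹) m w⁻¹
  have := hc.cocycle (b * d * m⁻¹) (m * w⁻¹) a
  have := hsymm (m * w⁻¹)
  have := hsymm (b * d * w⁻¹)
  simp only [mul_assoc, inv_mul_cancel_left, inv_mul_cancel, mul_one, hc.map_one_right] at *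
  linarith

end IsNormalized2Cocycle

lemma mul_inv_mem_center_of_conj_eq {G : Type*} [Group G] {u v : G}
    (h : ∀ g, u * g * u⁻¹ = v * g * v⁻¹) : u * v⁻¹ ∈ Subgroup.center G := by
  refine Subgroup.mem_center_iff.mpr fun g => ?_
  calc g * (u * v⁻¹) = u * (v⁻¹ * g * v) * u⁻¹ * (u * v⁻¹) := by rw [h]; group
    _ = u * v⁻¹ * g := by group

def IsAbstractKernel {G P : Type*} [Group G] [Group P] (Ψ : P → G ≃* G) (f : P → P → G) :
    Prop :=
  ∀ (α β : P) (g : G), Ψ α (Ψ β g) = f α β * Ψ (α * β) g * (f α β)⁻¹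

namespace IsAbstractKernel

variable {G P : Type*} [Group G] [Group P] {Ψ : P → G ≃* G} {f : P → P → G}

/-- `Ψ x (f y z) * f x (y * z)` and `f x y * f (x * y) z` both conjugate `Ψ (x * y * z)` into
`Ψ x ∘ Ψ y ∘ Ψ z`, so they differ by a central element. -/
lemma mul_inv_mem_center (hΨ : IsAbstractKernel Ψ f) (x y z : P) :
    Ψ x (f y z) * f x (y * z) * (f x y * f (x * y) z)⁻¹ ∈ Subgroup.center G := by
  refine mul_inv_mem_center_of_conj_eq fun g => ?_
  obtain ⟨g, rfl⟩ := (Ψ (x * y * z)).surjective g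
  calc Ψ x (f y z) * f x (y * z) * Ψ (x * y * z) g * (Ψ x (f y z) * f x (y * z))⁻¹
      = Ψ x (Ψ y (Ψ z g)) := by
        rw [hΨ y z, map_mul, map_mul, map_inv, hΨ x (y * z), mul_assoc x y z]; group
    _ = f x y * f (x * y) z * Ψ (x * y * z) g * (f x y * f (x * y) z)⁻¹ := by
        rw [hΨ x y, hΨ (x * y) z]; group

lemma conj_invariant {c : G → G → ℝ} (hΨ : IsAbstractKernel Ψ f)
    (hinv : ∀ (α : P) (g h : G), c (Ψ α g) (Ψ α h) = c g h) (α β : P) (g h : G) :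
    c (f α β * g * (f α β)⁻¹) (f α β * h * (f α β)⁻¹) = c g h := by
  obtain ⟨g, rfl⟩ := (Ψ (α * β)).surjective g
  obtain ⟨h, rfl⟩ := (Ψ (α * β)).surjective h
  rw [← hΨ, ← hΨ, hinv, hinv, hinv]

end IsAbstractKernel

namespace IsBounded2Cocycle

variable {G P : Type*} [Group G] [Group P] {Ψ : P → G ≃* G} {f : P → P → G} {c : G → G → ℝ}

lemma isNormalized2Cocycle (hc : IsBounded2Cocycle c) : IsNormalized2Cocycle c :=
  ⟨hc.2.1, hc.2.2.1, hc.2.2.2⟩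

lemma eq_zero_of_commute (hc : IsBounded2Cocycle c) (hhom : IsHomogeneous2Cocycle c)
    {g h : G} (hgh : Commute g h) (hsymm : c g h = c h g) : c g h = 0 := by
  obtain ⟨K, hK⟩ := hc.1
  exact eq_zero_of_forall_abs_nat_mul_le fun n =>
    hc.isNormalized2Cocycle.map_pow_pow_of_commute hhom hgh hsymm n ▸ hK _ _

/-- `x ↦ c a x - c (a * x * a⁻¹) a` is a bounded homomorphism to `ℝ`, hence zero. -/
lemma symm_of_conj_invariant (hc : IsBounded2Cocycle c) {a : G}
    (ha : ∀ g h, c (a * g * a⁻¹) (a * h * a⁻¹) = c g h) (g : G) : c a g = c g a := by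
  obtain ⟨⟨K, hK⟩, hco, -⟩ := hc
  have hφ (x y : G) : c a (x * y) - c (a * (x * y) * a⁻¹) a
      = (c a x - c (a * x * a⁻¹) a) + (c a y - c (a * y * a⁻¹) a) := by
    have h₁ := hco a x y
    have h₂ := hco (a * x * a⁻¹) (a * y * a⁻¹) a
    have h₃ := hco (a * x * a⁻¹) a y
    rw [show a * x * a⁻¹ * (a * y * a⁻¹) = a * (x * y) * a⁻¹ by group,
      show a * y * a⁻¹ * a = a * y by group, ha] at h₂
    rw [show a * x * a⁻¹ * a = a * x by group] at h₃
    linarith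
  have hφK (x : G) : |c a x - c (a * x * a⁻¹) a| ≤ 2 * K := by
    have h₁ := hK a x
    have h₂ := hK (a * x * a⁻¹) a
    rw [abs_le] at h₁ h₂ ⊢
    constructor <;> linarith
  have h₀ := eq_zero_of_map_mul_of_abs_le (φ := fun x => c a x - c (a * x * a⁻¹) a) hφ hφK (g * a)
  rw [show a * (g * a) * a⁻¹ = a * g by group] at h₀
  linarith [hco a g a]

lemma eq_zero_of_mem_center (hc : IsBounded2Cocycle c) (hhom : IsHomogeneous2Cocycle c)
    {z : G} (hz : z ∈ Subgroup.center G) (g : G) : c z g = 0 ∧ c g z = 0 := by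
  have hsymm : c z g = c g z := hc.symm_of_conj_invariant (fun x y => by
    rw [← Subgroup.mem_center_iff.mp hz x, ← Subgroup.mem_center_iff.mp hz y]
    group) g
  have h₀ := hc.eq_zero_of_commute hhom (Subgroup.mem_center_iff.mp hz g).symm hsymm
  exact ⟨h₀, hsymm ▸ h₀⟩

lemma map_center_mul_left (hc : IsBounded2Cocycle c) (hhom : IsHomogeneous2Cocycle c)
    {z : G} (hz : z ∈ Subgroup.center G) (g h : G) : c (z * g) h = c g h := by
  linarith [hc.2.1 z g h, (hc.eq_zero_of_mem_center hhom hz (g * h)).1,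
    (hc.eq_zero_of_mem_center hhom hz g).1]

lemma map_center_mul_right (hc : IsBounded2Cocycle c) (hhom : IsHomogeneous2Cocycle c)
    {z : G} (hz : z ∈ Subgroup.center G) (g h : G) : c g (z * h) = c g h := by
  have hgz : g * z = z * g := Subgroup.mem_center_iff.mp hz g
  linarith [hc.2.1 g z h, (hc.eq_zero_of_mem_center hhom hz h).1,
    (hc.eq_zero_of_mem_center hhom hz g).2, hgz ▸ hc.map_center_mul_left hhom hz g h]

lemma map_kernel_left (hc : IsBounded2Cocycle c) (hhom : IsHomogeneous2Cocycle c)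
    (hΨ : IsAbstractKernel Ψ f) (x y z : P) (g : G) :
    c (Ψ x (f y z)) g = c (f x y * f (x * y) z * (f x (y * z))⁻¹) g := by
  rw [← hc.map_center_mul_left hhom (hΨ.mul_inv_mem_center x y z)
    (f x y * f (x * y) z * (f x (y * z))⁻¹)]
  congr 1
  group

lemma map_kernel_right (hc : IsBounded2Cocycle c) (hhom : IsHomogeneous2Cocycle c)
    (hΨ : IsAbstractKernel Ψ f) (x y z : P) (g : G) :
    c g (Ψ x (f y z)) = c g (f x y * f (x * y) z * (f x (y * z))⁻¹) := by
  rw [← hc.map_center_mul_right hhom (hΨ.mul_inv_mem_center x y z) g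
    (f x y * f (x * y) z * (f x (y * z))⁻¹)]
  congr 1
  group

end IsBounded2Cocycle

lemma abs_eCochain_le {G P : Type*} [Group G] [Group P] {Ψ : P → G ≃* G} {f : P → P → G}
    {c : G → G → ℝ} {k : ℝ} (hk : ∀ g h : G, |c g h| ≤ k) (α β γ : P) :
    |eCochain Ψ f c α β γ| ≤ 2 * k := by
  have h₁ := abs_le.mp (hk (Ψ α (f β γ)) (f α (β * γ)))
  have h₂ := abs_le.mp (hk (f α β) (f (α * β) γ))
  exact abs_le.mpr ⟨by unfold eCochain; linarith, by unfold eCochain; linarith⟩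

/-- if the homogeneous bounded 2-cocycle `c` is `Π`-invariant, then the
composition cochain `e_c` is a bounded 3-cocycle on `Π` with trivial real coefficients,
with `|e_c| ≤ 2·sup|c|`; its class is the transgression `δ([c]) = d₃([c])`. -/
theorem stmt_17 {G P : Type*} [Group G] [Group P]
    (Ψ : P → G ≃* G) (f : P → P → G)
    (hkernel : ∀ (α β : P) (g : G),
      Ψ α (Ψ β g) = f α β * Ψ (α * β) g * (f α β)⁻¹)
    (c : G → G → ℝ) (hc : IsBounded2Cocycle c) (hhom : IsHomogeneous2Cocycle c)
    (hinv : ∀ (α : P) (g h : G), c (Ψ α g) (Ψ α h) = c g h) :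
    (∀ α β γ ζ : P,
      eCochain Ψ f c β γ ζ - eCochain Ψ f c (α * β) γ ζ + eCochain Ψ f c α (β * γ) ζ
        - eCochain Ψ f c α β (γ * ζ) + eCochain Ψ f c α β γ = 0) ∧
    (∀ k : ℝ, (∀ g h : G, |c g h| ≤ k) →
      ∀ α β γ : P, |eCochain Ψ f c α β γ| ≤ 2 * k) := by
  have hΨ : IsAbstractKernel Ψ f := hkernel
  have hleft := hc.map_kernel_left hhom hΨ
  have hright := hc.map_kernel_right hhom hΨ
  refine ⟨fun α β γ ζ => ?_, fun k hk => abs_eCochain_le hk⟩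
  have h₁ : c (Ψ β (f γ ζ)) (f β (γ * ζ)) = c (f (α * β) γ * f (α * β * γ) ζ *
      (f (α * β) (γ * ζ))⁻¹) (f (α * β) (γ * ζ) * (f α (β * (γ * ζ)))⁻¹ * f α β) :=
    calc c (Ψ β (f γ ζ)) (f β (γ * ζ))
        = c (f α β * Ψ (α * β) (f γ ζ) * (f α β)⁻¹)
            (f α β * (f (α * β) (γ * ζ) * (f α (β * (γ * ζ)))⁻¹ * f α β) * (f α β)⁻¹) := by
          rw [← hinv α, hkernel, hright]
          group
      _ = _ := by rw [hΨ.conj_invariant hinv, hleft]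
  have h₂ : c (f β γ) (f (β * γ) ζ) = c (f α β * f (α * β) γ * (f α (β * γ))⁻¹)
      (f α (β * γ) * f (α * (β * γ)) ζ * (f α (β * γ * ζ))⁻¹) := by
    rw [← hinv α, hleft, hright]
  have key := hc.isNormalized2Cocycle.transgression_identity (f α β) (f (α * β) γ)
    (f (α * β * γ) ζ) (f α (β * γ)) (f (α * β) (γ * ζ)) (f α (β * γ * ζ))
    (hc.symm_of_conj_invariant (hΨ.conj_invariant hinv α β))
  simp only [eCochain, h₁, h₂, hleft]
  simp only [mul_assoc] at key ⊢
  linarith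
end
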